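/- arXiv:1308.1976 — 6 statements merged into one kernel-verified Lean document; each statement's English description precedes it below -/
import Mathlib

section
/- Let X be a group, π a set of primes, and Y a subgroup of X that is 𝓕_π-separable in X (i.e., Y is the intersection of the sets YN over all normal subgroups N of X with X/N a finite π-group). If X is 𝓕_π-quasi-regular by Y (for each normal subgroup M of Y with Y/M a finite π-group there is a normal subgroup N of X with X/N a finite π-group and N ∩ Y ≤ M), then every normal subgroup M of Y of finite π-index in Y is 𝓕_π-separable in X. -/
open Pointwise

def IsPiNumber (π : Set ℕ) (n : ℕ) : Prop := n ≠ 0 ∧ ∀ p : ℕ, p.Prime → p ∣ n → p ∈ π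

def IsPiPrimeNumber (π : Set ℕ) (n : ℕ) : Prop := n ≠ 0 ∧ ∀ p : ℕ, p.Prime → p ∣ n → p ∉ π

/-- `N` is a normal subgroup of finite π-index, i.e. `N ∈ Ω_π(X)`. -/
def InOmega (π : Set ℕ) {X : Type*} [Group X] (N : Subgroup X) : Prop :=
  N.Normal ∧ IsPiNumber π N.index

/-- `Y` is separable by the family `F` of subgroups. -/
def SepBy {X : Type*} [Group X] (F : Set (Subgroup X)) (Y : Subgroup X) : Prop :=
  (⋂ N ∈ F, (Y : Set X) * (N : Set X)) = (Y : Set X)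

/-- `Y` is 𝓕_π-separable in `X`. -/
def SepIn (π : Set ℕ) {X : Type*} [Group X] (Y : Subgroup X) : Prop :=
  SepBy {N : Subgroup X | InOmega π N} Y

/-- `Y` is π'-isolated in `X`. -/
def Isolated (π : Set ℕ) {X : Type*} [Group X] (Y : Subgroup X) : Prop :=
  ∀ x : X, ∀ q : ℕ, IsPiPrimeNumber π q → x ^ q ∈ Y → x ∈ Y

/-- `X` is residually a finite π-group. -/
def ResiduallyPi (π : Set ℕ) (X : Type*) [Group X] : Prop :=
  ∀ x : X, x ≠ 1 → ∃ N : Subgroup X, InOmega π N ∧ x ∉ N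

/-- If `Y` is 𝓕_π-separable in `X` and `X` is 𝓕_π-quasi-regular by `Y`, then every
normal subgroup of `Y` of finite π-index in `Y` is 𝓕_π-separable in `X`. -/
theorem sep_of_quasiRegular (π : Set ℕ) {X : Type*} [Group X] (Y : Subgroup X)
    (hY : SepIn π Y)
    (hqr : ∀ M : Subgroup X, M ≤ Y →
      (M.subgroupOf Y).Normal → IsPiNumber π (M.subgroupOf Y).index →
      ∃ N : Subgroup X, InOmega π N ∧ N ⊓ Y ≤ M) :
    ∀ M : Subgroup X, M ≤ Y →
      (M.subgroupOf Y).Normal → IsPiNumber π (M.subgroupOf Y).index →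
      SepIn π M := by
  intro M hMY hnorm hidx
  obtain ⟨N₀, hN₀, hN₀Y⟩ := hqr M hMY hnorm hidx
  unfold SepIn SepBy
  apply subset_antisymm
  · intro x hx
    simp only [Set.mem_iInter, Set.mem_setOf_eq] at hx
    have hxY : x ∈ (Y : Set X) := by
      rw [← hY]
      simp only [Set.mem_iInter, Set.mem_setOf_eq]
      intro N hN
      obtain ⟨m, hm, n, hn, rfl⟩ := hx N hN
      exact Set.mul_mem_mul (hMY hm) hn
    obtain ⟨m, hm, n, hn, rfl⟩ := hx N₀ hN₀
    have hnY : n ∈ Y := by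
      have : n = m⁻¹ * (m * n) := by group
      rw [this]
      exact Y.mul_mem (Y.inv_mem (hMY hm)) hxY
    exact M.mul_mem hm (hN₀Y ⟨hn, hnY⟩)
  · intro x hx
    simp only [Set.mem_iInter, Set.mem_setOf_eq]
    intro N hN
    exact ⟨x, hx, 1, N.one_mem, mul_one x⟩
end

section
/- Let X be a group, π a set of primes, and Y an 𝓕_π-separable subgroup of X. If every subgroup M ∈ Ω_π(Y) (normal in Y with Y/M a finite π-group, and of finite index) is 𝓕_π-separable in X, then X is 𝓕_π-quasi-regular by Y: for each M ∈ Ω_π(Y) there exists N ∈ Ω_π(X) with N ∩ Y ≤ M. -/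
/-!
Let `M ∈ Ω_π(Y)` and pick representatives `y₁, …, yₖ` of the finitely many cosets of `M` in `Y`.
Since `M` is `𝓕_π`-separable and `M N = M ⊔ N` for normal `N`, each `yᵢ ∉ M` lies outside some
`M Nᵢ` with `Nᵢ ∈ Ω_π(X)`. As `Ω_π(X)` is closed under finite intersections,
`N = ⋂ Nᵢ ∈ Ω_π(X)`, and every `x ∈ N ∩ Y` has a representative `yᵢ ∈ x M ⊆ M N`, forcing
`yᵢ ∈ M` and hence `x ∈ M`.
-/

open Pointwise

namespace Subgroup

variable {X : Type*} [Group X]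

lemma index_inf_dvd_of_normal (A B : Subgroup X) [B.Normal] :
    (A ⊓ B).index ∣ A.index * B.index := by
  rw [← relIndex_mul_index (inf_le_left : A ⊓ B ≤ A), inf_relIndex_left, mul_comm A.index]
  exact mul_dvd_mul_right (relIndex_dvd_index_of_normal B A) _

lemma inf_le_of_forall_out_mem_sup {M Y N : Subgroup X}
    (h : ∀ c : Y ⧸ M.subgroupOf Y, ((c.out : Y) : X) ∈ M ⊔ N → ((c.out : Y) : X) ∈ M) :
    N ⊓ Y ≤ M := by
  rintro x ⟨hxN, hxY⟩
  obtain ⟨⟨m, hm⟩, hout⟩ := QuotientGroup.mk_out_eq_mul (M.subgroupOf Y) ⟨x, hxY⟩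
  have hy : (((QuotientGroup.mk ⟨x, hxY⟩ : Y ⧸ M.subgroupOf Y).out : Y) : X) = x * m :=
    congrArg Subtype.val hout
  have hxm : x * m ∈ M := hy ▸ h _ (hy ▸ mul_mem (mem_sup_right hxN) (mem_sup_left hm))
  simpa using mul_mem hxm (inv_mem hm)

end Subgroup

section

variable {π : Set ℕ}

lemma isPiNumber_one : IsPiNumber π 1 :=
  ⟨one_ne_zero, fun _ hp hdvd => absurd (Nat.eq_one_of_dvd_one hdvd) hp.ne_one⟩

lemma IsPiNumber.mul {a b : ℕ} (ha : IsPiNumber π a) (hb : IsPiNumber π b) :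
    IsPiNumber π (a * b) :=
  ⟨mul_ne_zero ha.1 hb.1, fun p hp hdvd => (hp.dvd_mul.mp hdvd).elim (ha.2 p hp) (hb.2 p hp)⟩

lemma IsPiNumber.of_dvd {a b : ℕ} (hb : IsPiNumber π b) (hab : a ∣ b) : IsPiNumber π a :=
  ⟨ne_zero_of_dvd_ne_zero hb.1 hab, fun p hp hdvd => hb.2 p hp (hdvd.trans hab)⟩

variable {X : Type*} [Group X]

lemma inOmega_top : InOmega π (⊤ : Subgroup X) :=
  ⟨inferInstance, by simpa using isPiNumber_one⟩

lemma InOmega.inf {A B : Subgroup X} (hA : InOmega π A) (hB : InOmega π B) :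
    InOmega π (A ⊓ B) :=
  have := hA.1
  have := hB.1
  ⟨inferInstance, (hA.2.mul hB.2).of_dvd (Subgroup.index_inf_dvd_of_normal A B)⟩

lemma SepIn.exists_notMem_sup {M : Subgroup X} (hM : SepIn π M) {x : X} (hx : x ∉ M) :
    ∃ N : Subgroup X, InOmega π N ∧ x ∉ M ⊔ N := by
  unfold SepIn SepBy at hM
  rw [← SetLike.mem_coe, ← hM] at hx
  simp only [Set.mem_iInter, not_forall] at hx
  obtain ⟨N, hN, hxN⟩ := hx
  have := hN.1
  exact ⟨N, hN, by rwa [← SetLike.mem_coe, Subgroup.mul_normal]⟩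

lemma SepIn.exists_forall_notMem_sup {M : Subgroup X} (hM : SepIn π M) {s : Set X}
    (hs : s.Finite) (hsM : ∀ x ∈ s, x ∉ M) :
    ∃ N : Subgroup X, InOmega π N ∧ ∀ x ∈ s, x ∉ M ⊔ N := by
  induction s, hs using Set.Finite.induction_on with
  | empty => exact ⟨⊤, inOmega_top, by simp⟩
  | @insert a s _ _ ih =>
    obtain ⟨Na, hNa, haNa⟩ := hM.exists_notMem_sup (hsM a (Set.mem_insert a s))
    obtain ⟨N, hN, hsN⟩ := ih fun x hx => hsM x (Set.mem_insert_of_mem a hx)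
    refine ⟨Na ⊓ N, hNa.inf hN, ?_⟩
    rintro x (rfl | hx) hmem
    · exact haNa (sup_le_sup_left inf_le_left M hmem)
    · exact hsN x hx (sup_le_sup_left inf_le_right M hmem)

end

theorem quasiRegular_of_sep_general (π : Set ℕ) {X : Type*} [Group X] (Y : Subgroup X)
    (hsep : ∀ M : Subgroup X, M ≤ Y →
      (M.subgroupOf Y).Normal → IsPiNumber π (M.subgroupOf Y).index → SepIn π M) :
    ∀ M : Subgroup X, M ≤ Y →
      (M.subgroupOf Y).Normal → IsPiNumber π (M.subgroupOf Y).index →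
      ∃ N : Subgroup X, InOmega π N ∧ N ⊓ Y ≤ M := by
  intro M hMY hnormal hindex
  have : (M.subgroupOf Y).FiniteIndex := ⟨hindex.1⟩
  obtain ⟨N, hN, hrepsN⟩ := (hsep M hMY hnormal hindex).exists_forall_notMem_sup
    ((Set.finite_range fun c : Y ⧸ M.subgroupOf Y => ((c.out : Y) : X)).sdiff (t := M))
    fun _ hx => hx.2
  exact ⟨N, hN, Subgroup.inf_le_of_forall_out_mem_sup fun c hc =>
    by_contra fun hcM => hrepsN _ ⟨⟨c, rfl⟩, hcM⟩ hc⟩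

/-- If `Y` is 𝓕_π-separable in `X` and all subgroups of `Ω_π(Y)` are 𝓕_π-separable
in `X`, then `X` is 𝓕_π-quasi-regular by `Y`. -/
theorem quasiRegular_of_sep (π : Set ℕ) {X : Type*} [Group X] (Y : Subgroup X)
    (hY : SepIn π Y)
    (hsep : ∀ M : Subgroup X, M ≤ Y →
      (M.subgroupOf Y).Normal → IsPiNumber π (M.subgroupOf Y).index → SepIn π M) :
    ∀ M : Subgroup X, M ≤ Y →
      (M.subgroupOf Y).Normal → IsPiNumber π (M.subgroupOf Y).index →
      ∃ N : Subgroup X, InOmega π N ∧ N ⊓ Y ≤ M :=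
  quasiRegular_of_sep_general π Y hsep
end

section
/- Let X be a group, π a set of primes, and Y a subnormal subgroup of X of finite π-index (there is a chain Y = Y₀ ⊴ Y₁ ⊴ ⋯ ⊴ Yₙ = X and [X : Y] is a finite π-number). Then X is 𝓕_π-quasi-regular by Y: for every normal subgroup M of Y with Y/M a finite π-group, there exists a normal subgroup N of X with X/N a finite π-group and N ∩ Y ≤ M; moreover N may be chosen with N ≤ M. -/
open Pointwise

/-!
If `K ⊴ G` has π-index and `M ⊴ K` has π-index in `K`, then the normal core of `M` in `G` is the
intersection of the conjugates `gMg⁻¹`. These are normal subgroups of `K` of the same index, at most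
`[G : K]` of them are distinct, and a finite intersection of normal subgroups of π-index has
π-index (for `B` normal, `[A : A ⊓ B]` divides `[G : B]`). Hence the core is a normal subgroup of
π-index inside `M`. Applying this inside each term of the chain `Y = Y₀ ⊴ Y₁ ⊴ ⋯ ⊴ Yₙ = X` moves
the subgroup up one step at a time, until it is normal of π-index in `X` and still inside `M`.
-/

namespace IsPiNumber

variable {π : Set ℕ} {m n : ℕ}

lemma one : IsPiNumber π 1 :=
  ⟨one_ne_zero, fun _ hp hd => absurd (Nat.le_of_dvd one_pos hd) hp.one_lt.not_ge⟩

lemma of_dvd_s4 (hn : IsPiNumber π n) (hmn : m ∣ n) : IsPiNumber π m :=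
  ⟨fun hm => hn.1 (Nat.eq_zero_of_zero_dvd (hm ▸ hmn)), fun p hp hd => hn.2 p hp (hd.trans hmn)⟩

lemma mul_s4 (hm : IsPiNumber π m) (hn : IsPiNumber π n) : IsPiNumber π (m * n) :=
  ⟨mul_ne_zero hm.1 hn.1, fun p hp hd => (hp.dvd_mul.mp hd).elim (hm.2 p hp) (hn.2 p hp)⟩

end IsPiNumber

namespace Subgroup

variable {G : Type*} [Group G]

lemma Normal.comap_conj_eq {H : Subgroup G} (hH : H.Normal) (g : G) :
    H.comap (MulAut.conj g).toMonoidHom = H := by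
  ext x
  refine ⟨fun hx => ?_, fun hx => hH.conj_mem x hx g⟩
  simpa [mul_assoc] using hH.conj_mem _ hx g⁻¹

variable {K : Subgroup G} [K.Normal] {N : Subgroup K}

lemma Normal.comap_conjNormal_mul (hN : N.Normal) (g : G) (k : K) :
    N.comap (MulAut.conjNormal (g * k)).toMonoidHom =
      N.comap (MulAut.conjNormal g).toMonoidHom := by
  rw [map_mul, MulAut.conjNormal_val]
  ext x
  exact SetLike.ext_iff.mp ((hN.comap (MulAut.conjNormal g).toMonoidHom).comap_conj_eq k) x

lemma Normal.finite_range_comap_conjNormal [K.FiniteIndex] (hN : N.Normal) :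
    (Set.range fun g : G => N.comap (MulAut.conjNormal g).toMonoidHom).Finite := by
  rw [← Set.range_quotient_lift (s := QuotientGroup.leftRel K) fun a b hab => by
    simpa using (Normal.comap_conjNormal_mul hN a ⟨_, QuotientGroup.leftRel_apply.mp hab⟩).symm]
  have : Finite (G ⧸ K) := inferInstance
  exact Set.finite_range _

end Subgroup

namespace InOmega

open Subgroup

variable {π : Set ℕ} {G : Type*} [Group G]

lemma top : InOmega π (⊤ : Subgroup G) :=
  ⟨inferInstance, by simpa using IsPiNumber.one⟩

lemma inf_s4 {A B : Subgroup G} (hA : InOmega π A) (hB : InOmega π B) : InOmega π (A ⊓ B) := by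
  have := hA.1
  have := hB.1
  refine ⟨inferInstance, ?_⟩
  rw [← relIndex_mul_index inf_le_left, inf_comm, inf_relIndex_right]
  exact (hB.2.of_dvd_s4 (relIndex_dvd_index_of_normal B A)).mul_s4 hA.2

lemma sInf {S : Set (Subgroup G)} (hS : S.Finite) (h : ∀ H ∈ S, InOmega π H) :
    InOmega π (sInf S) := by
  induction S, hS using Set.Finite.induction_on with
  | empty => simpa using top
  | insert _ _ ih =>
    rw [sInf_insert]
    exact (h _ (Set.mem_insert _ _)).inf_s4 (ih fun H hH => h H (Set.mem_insert_of_mem _ hH))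

lemma comap {K : Type*} [Group K] {N : Subgroup K} (hN : InOmega π N) {f : G →* K}
    (hf : Function.Surjective f) : InOmega π (N.comap f) :=
  ⟨hN.1.comap f, index_comap_of_surjective N hf ▸ hN.2⟩

lemma of_subgroupOf_top {N : Subgroup G} (h : InOmega π (N.subgroupOf ⊤)) : InOmega π N :=
  ⟨normalizer_eq_top_iff.mp (top_le_iff.mp ((normal_subgroupOf_iff_le_normalizer le_top).mp h.1)),
    relIndex_top_right N ▸ h.2⟩

lemma normalCore {K M : Subgroup G} (hK : InOmega π K) (hMK : M ≤ K)
    (hM : InOmega π (M.subgroupOf K)) : InOmega π M.normalCore := by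
  have := hK.1
  have : K.FiniteIndex := ⟨hK.2.1⟩
  have hcore : M.normalCore.subgroupOf K =
      ⨅ g : G, (M.subgroupOf K).comap (MulAut.conjNormal g).toMonoidHom := by
    ext x
    simp only [mem_subgroupOf, mem_iInf, mem_comap, MulEquiv.toMonoidHom_eq_coe, MonoidHom.coe_coe,
      MulAut.conjNormal_apply]
    rfl
  have hrel : InOmega π (M.normalCore.subgroupOf K) := by
    rw [hcore, ← sInf_range]
    refine .sInf (Normal.finite_range_comap_conjNormal hM.1) ?_
    rintro _ ⟨g, rfl⟩
    exact hM.comap (MulEquiv.surjective _)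
  refine ⟨M.normalCore_normal, ?_⟩
  rw [← relIndex_mul_index (M.normalCore_le.trans hMK)]
  exact hrel.2.mul_s4 hK.2

lemma exists_le_subgroupOf {H K M : Subgroup G} (hKH : K ≤ H) (hMK : M ≤ K)
    (hK : InOmega π (K.subgroupOf H)) (hM : InOmega π (M.subgroupOf K)) :
    ∃ N ≤ M, InOmega π (N.subgroupOf H) := by
  have hM' : InOmega π ((M.subgroupOf H).subgroupOf (K.subgroupOf H)) := by
    refine ⟨?_, ?_⟩
    · rw [normal_subgroupOf_iff_le_normalizer (subgroupOf_mono H hMK),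
        ← subgroupOf_normalizer_eq (hMK.trans hKH)]
      exact subgroupOf_mono H ((normal_subgroupOf_iff_le_normalizer hMK).mp hM.1)
    · rw [← relIndex, relIndex_subgroupOf hKH]
      exact hM.2
  refine ⟨(M.subgroupOf H).normalCore.map H.subtype, map_le_iff_le_comap.mpr (normalCore_le _), ?_⟩
  rw [subgroupOf, comap_map_eq_self_of_injective H.subtype_injective]
  exact hK.normalCore (subgroupOf_mono H hMK) hM'

lemma exists_le_of_subnormal {n : ℕ} {Yc : ℕ → Subgroup G}
    (hchain : ∀ i < n, Yc i ≤ Yc (i + 1) ∧ ((Yc i).subgroupOf (Yc (i + 1))).Normal)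
    (htop : Yc n = ⊤) (hind : IsPiNumber π (Yc 0).index) {M : Subgroup G} (hM0 : M ≤ Yc 0)
    (hM : InOmega π (M.subgroupOf (Yc 0))) : ∃ N ≤ M, InOmega π N := by
  induction n generalizing Yc M with
  | zero => exact ⟨M, le_rfl, .of_subgroupOf_top (htop ▸ hM)⟩
  | succ n ih =>
    obtain ⟨hle, hnormal⟩ := hchain 0 n.succ_pos
    have hstep : InOmega π ((Yc 0).subgroupOf (Yc 1)) :=
      ⟨hnormal, hind.of_dvd_s4 (relIndex_dvd_index_of_le hle)⟩
    obtain ⟨N, hNM, hN⟩ := exists_le_subgroupOf hle hM0 hstep hM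
    obtain ⟨N', hN'N, hN'⟩ := ih (Yc := fun i => Yc (i + 1))
      (fun i hi => hchain (i + 1) (by omega)) htop (hind.of_dvd_s4 (index_dvd_of_le hle))
      (hNM.trans (hM0.trans hle)) hN
    exact ⟨N', hN'N.trans hNM, hN'⟩

end InOmega

/-- If `Y` is a subnormal subgroup of finite π-index of `X`, then `X` is
𝓕_π-quasi-regular by `Y`; moreover the witness `N` may be chosen inside `M`. -/
theorem quasiRegular_of_subnormal (π : Set ℕ) {X : Type*} [Group X] (Y : Subgroup X)
    (hchain : ∃ (n : ℕ) (Yc : ℕ → Subgroup X), Yc 0 = Y ∧ Yc n = ⊤ ∧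
      ∀ i < n, Yc i ≤ Yc (i + 1) ∧ ((Yc i).subgroupOf (Yc (i + 1))).Normal)
    (hind : IsPiNumber π Y.index) :
    ∀ M : Subgroup X, M ≤ Y →
      (M.subgroupOf Y).Normal → IsPiNumber π (M.subgroupOf Y).index →
      ∃ N : Subgroup X, InOmega π N ∧ N ⊓ Y ≤ M ∧ N ≤ M := by
  obtain ⟨n, Yc, rfl, htop, hchain⟩ := hchain
  intro M hMY hMn hMπ
  obtain ⟨N, hNM, hN⟩ := InOmega.exists_le_of_subnormal hchain htop hind hMY ⟨hMn, hMπ⟩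
  exact ⟨N, hN, inf_le_left.trans hNM, hNM⟩
end

section
/- Let X be a group that is residually a finite π-group and let Y be an abelian subgroup of X. Then the set of all π'-roots of elements of Y, i.e., {x ∈ X : ∃ q a π'-number, x^q ∈ Y}, is an abelian subgroup of X, and it equals the π'-isolator of Y in X (the smallest π'-isolated subgroup of X containing Y). -/
/-!
Modulo a normal subgroup `N` of finite π-index every element has order dividing the π-number
`|X : N|`, so raising to a π'-number `q` is invertible on cyclic subgroups of `X/N`: each `a` is
a power of `a ^ q`. Hence if `a ^ q, b ^ r ∈ Y` then `a` and `b` commute modulo every such `N`,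
and residual finiteness makes them commute in `X`. Once the π'-roots of `Y` commute, they are
closed under products (`(ab) ^ (qr) = (a ^ q) ^ r (b ^ r) ^ q`), and this subgroup is visibly
the smallest π'-isolated one containing `Y`.
-/

open Pointwise

variable {π : Set ℕ}

lemma IsPiPrimeNumber.one : IsPiPrimeNumber π 1 :=
  ⟨one_ne_zero, fun _ hp hd _ => hp.one_lt.ne' (Nat.eq_one_of_dvd_one hd)⟩

lemma IsPiPrimeNumber.mul {q r : ℕ} (hq : IsPiPrimeNumber π q) (hr : IsPiPrimeNumber π r) :
    IsPiPrimeNumber π (q * r) :=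
  ⟨Nat.mul_ne_zero hq.1 hr.1, fun p hp hd =>
    ((Nat.Prime.dvd_mul hp).mp hd).elim (hq.2 p hp) (hr.2 p hp)⟩

lemma IsPiPrimeNumber.coprime {q n : ℕ} (hq : IsPiPrimeNumber π q) (hn : IsPiNumber π n) :
    q.Coprime n := by
  by_contra hg
  have hp : (q.gcd n).minFac.Prime := Nat.minFac_prime hg
  exact hq.2 _ hp ((Nat.minFac_dvd _).trans (Nat.gcd_dvd_left _ _))
    (hn.2 _ hp ((Nat.minFac_dvd _).trans (Nat.gcd_dvd_right _ _)))

lemma commute_of_commute_pow_of_coprime {G : Type*} [Group G] {a b : G} {q r : ℕ}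
    (hq : q.Coprime (orderOf a)) (hr : r.Coprime (orderOf b)) (h : Commute (a ^ q) (b ^ r)) :
    Commute a b := by
  obtain ⟨k, hk⟩ := exists_pow_eq_self_of_coprime hq
  obtain ⟨l, hl⟩ := exists_pow_eq_self_of_coprime hr
  rw [← hk, ← hl]
  exact h.pow_pow k l

section Group

variable {X : Type*} [Group X]

lemma IsPiPrimeNumber.coprime_orderOf_mk {N : Subgroup X} [N.Normal]
    (hN : IsPiNumber π N.index) {q : ℕ} (hq : IsPiPrimeNumber π q) (x : X) :
    q.Coprime (orderOf (x : X ⧸ N)) :=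
  (hq.coprime hN).coprime_dvd_right <| orderOf_dvd_of_pow_eq_one <| by
    rw [← QuotientGroup.mk_pow, QuotientGroup.eq_one_iff]
    exact N.pow_index_mem x

lemma ResiduallyPi.eq_one_of_forall_mem (hres : ResiduallyPi π X)
    {x : X} (hx : ∀ N : Subgroup X, InOmega π N → x ∈ N) : x = 1 := by
  by_contra hne
  obtain ⟨N, hN, hxN⟩ := hres x hne
  exact hxN (hx N hN)

lemma ResiduallyPi.commute_of_commute_pow (hres : ResiduallyPi π X)
    {a b : X} {q r : ℕ} (hq : IsPiPrimeNumber π q) (hr : IsPiPrimeNumber π r)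
    (h : Commute (a ^ q) (b ^ r)) : Commute a b := by
  rw [Commute, SemiconjBy, ← mul_inv_eq_one]
  refine hres.eq_one_of_forall_mem fun N ⟨_, hN⟩ => ?_
  have hmod : Commute (a : X ⧸ N) (b : X ⧸ N) :=
    commute_of_commute_pow_of_coprime (hq.coprime_orderOf_mk hN a) (hr.coprime_orderOf_mk hN b)
      (by simpa only [QuotientGroup.mk'_apply, QuotientGroup.mk_pow]
        using h.map (QuotientGroup.mk' N))
  rw [← QuotientGroup.eq_one_iff, QuotientGroup.mk_mul, QuotientGroup.mk_inv,
    QuotientGroup.mk_mul, QuotientGroup.mk_mul, hmod.eq, mul_inv_cancel]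

def piRoots (π : Set ℕ) (Y : Subgroup X) : Set X :=
  {x : X | ∃ q : ℕ, IsPiPrimeNumber π q ∧ x ^ q ∈ Y}

lemma ResiduallyPi.commute_of_mem_piRoots (hres : ResiduallyPi π X) {Y : Subgroup X}
    (hab : ∀ a ∈ Y, ∀ b ∈ Y, Commute a b) {a b : X} (ha : a ∈ piRoots π Y)
    (hb : b ∈ piRoots π Y) : Commute a b := by
  obtain ⟨q, hq, haq⟩ := ha
  obtain ⟨r, hr, hbr⟩ := hb
  exact hres.commute_of_commute_pow hq hr (hab _ haq _ hbr)

def piRootSubgroup (π : Set ℕ) (Y : Subgroup X)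
    (hcomm : ∀ a ∈ piRoots π Y, ∀ b ∈ piRoots π Y, Commute a b) : Subgroup X where
  carrier := piRoots π Y
  one_mem' := ⟨1, .one, by simp⟩
  mul_mem' := by
    rintro a b ⟨q, hq, ha⟩ ⟨r, hr, hb⟩
    refine ⟨q * r, hq.mul hr, ?_⟩
    rw [(hcomm a ⟨q, hq, ha⟩ b ⟨r, hr, hb⟩).mul_pow, pow_mul, mul_comm q, pow_mul]
    exact Y.mul_mem (Y.pow_mem ha r) (Y.pow_mem hb q)
  inv_mem' := by
    rintro a ⟨q, hq, ha⟩
    exact ⟨q, hq, by simpa only [inv_pow] using Y.inv_mem ha⟩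

variable {Y : Subgroup X} {hcomm : ∀ a ∈ piRoots π Y, ∀ b ∈ piRoots π Y, Commute a b}

lemma le_piRootSubgroup : Y ≤ piRootSubgroup π Y hcomm :=
  fun y hy => ⟨1, .one, by simpa using hy⟩

lemma isolated_piRootSubgroup : Isolated π (piRootSubgroup π Y hcomm) := by
  rintro x q hq ⟨r, hr, hxr⟩
  exact ⟨q * r, hq.mul hr, by rwa [pow_mul]⟩

lemma piRootSubgroup_le {W : Subgroup X} (hYW : Y ≤ W) (hW : Isolated π W) :
    piRootSubgroup π Y hcomm ≤ W := by
  rintro x ⟨q, hq, hx⟩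
  exact hW x q hq (hYW hx)

end Group

/-- In a residually-(finite π) group, the set of π'-roots of an abelian subgroup `Y`
is an abelian subgroup, and it is the smallest π'-isolated subgroup containing `Y`. -/
theorem isolator_of_abelian (π : Set ℕ) {X : Type*} [Group X]
    (hres : ResiduallyPi π X) (Y : Subgroup X)
    (hab : ∀ a ∈ Y, ∀ b ∈ Y, a * b = b * a) :
    ∃ Z : Subgroup X,
      (Z : Set X) = {x : X | ∃ q : ℕ, IsPiPrimeNumber π q ∧ x ^ q ∈ Y} ∧
      (∀ a ∈ Z, ∀ b ∈ Z, a * b = b * a) ∧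
      Y ≤ Z ∧ Isolated π Z ∧
      ∀ W : Subgroup X, Y ≤ W → Isolated π W → Z ≤ W := by
  have hcomm : ∀ a ∈ piRoots π Y, ∀ b ∈ piRoots π Y, Commute a b :=
    fun _ ha _ hb => hres.commute_of_mem_piRoots hab ha hb
  exact ⟨piRootSubgroup π Y hcomm, rfl, hcomm, le_piRootSubgroup, isolated_piRootSubgroup,
    fun _ hYW hW => piRootSubgroup_le hYW hW⟩
end

section
/- Let G = ⟨A * B; [H,K] = 1⟩ be the free product of A and B with commuting subgroups H ≤ A and K ≤ B. Set U = HK, M = ⟨A, U⟩ and N = ⟨B, U⟩ inside G. Then U is isomorphic to the direct product H × K, M is the free product of A and U amalgamated over H, N is the free product of B and U amalgamated over K, and G is the free product of M and N amalgamated over U. -/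
/-!
The subgroup `U = HK` is the image of `H × K` under `(h, k) ↦ h k`, and this map is injective
because its composite with the natural map `G → A × B` is the inclusion `H × K ≤ A × B`.

For the amalgam structure of `M` (and symmetrically `N`) one builds the abstract group
`Ĝ = (A ∗_H U) ∗_U (B ∗_K U)`. The defining relations of `G` hold in `Ĝ`, since the copies of
`H` and `K` are identified with subgroups of `U`, where they commute; hence there is a map
`G → Ĝ`. Composed with the natural map `A ∗_H U → M ≤ G` it is the canonical map into the
amalgam `Ĝ`, which is injective by the normal form theorem for amalgamated products, so
`A ∗_H U ≅ M`. That `G = M ∗_U N` needs no normal forms: `G` is generated by `M ∪ N`, and the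
relations of `G` already hold in any pushout of `M ← U → N`.
-/

open Monoid

open scoped commutatorElement

variable {A B : Type*} [Group A] [Group B]

/-- The free product of `A` and `B` with commuting subgroups `H ≤ A`, `K ≤ B`:
the quotient of the free product `A * B` by the normal closure of the mutual
commutators `[h, k]`, `h ∈ H`, `k ∈ K`. -/
abbrev FPComm (H : Subgroup A) (K : Subgroup B) : Type _ :=
  Coprod A B ⧸ Subgroup.normalClosure
    {x : Coprod A B | ∃ h ∈ H, ∃ k ∈ K, x = ⁅(Coprod.inl h : Coprod A B), Coprod.inr k⁆}

/-- The canonical map `A → G`. -/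
noncomputable def iaFP (H : Subgroup A) (K : Subgroup B) : A →* FPComm H K :=
  (QuotientGroup.mk' _).comp Coprod.inl

/-- The canonical map `B → G`. -/
noncomputable def ibFP (H : Subgroup A) (K : Subgroup B) : B →* FPComm H K :=
  (QuotientGroup.mk' _).comp Coprod.inr

/-- The subgroup `U = HK` of `G`. -/
noncomputable def Usub (H : Subgroup A) (K : Subgroup B) : Subgroup (FPComm H K) :=
  H.map (iaFP H K) ⊔ K.map (ibFP H K)

/-- The subgroup `M = ⟨A, U⟩` of `G`. -/
noncomputable def Msub (H : Subgroup A) (K : Subgroup B) : Subgroup (FPComm H K) :=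
  (iaFP H K).range ⊔ Usub H K

/-- The subgroup `N = ⟨B, U⟩` of `G`. -/
noncomputable def Nsub (H : Subgroup A) (K : Subgroup B) : Subgroup (FPComm H K) :=
  (ibFP H K).range ⊔ Usub H K

universe u

namespace Amalgam

def Factor (G₁ G₂ : Type u) : Bool → Type u
  | true => G₁
  | false => G₂

variable {C : Type*} {G₁ G₂ : Type u} [Group C] [Group G₁] [Group G₂]

instance (b : Bool) : Group (Factor G₁ G₂ b) :=
  match b with
  | true => inferInstanceAs (Group G₁)
  | false => inferInstanceAs (Group G₂)

def legs (φ₁ : C →* G₁) (φ₂ : C →* G₂) : ∀ b, C →* Factor G₁ G₂ b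
  | true => φ₁
  | false => φ₂

end Amalgam

abbrev Amalgam {C : Type*} {G₁ G₂ : Type u} [Group C] [Group G₁] [Group G₂]
    (φ₁ : C →* G₁) (φ₂ : C →* G₂) : Type _ :=
  PushoutI (Amalgam.legs φ₁ φ₂)

namespace Amalgam

variable {C : Type*} {G₁ G₂ : Type u} [Group C] [Group G₁] [Group G₂]
  {φ₁ : C →* G₁} {φ₂ : C →* G₂} {P : Type*} [Group P]

def inl : G₁ →* Amalgam φ₁ φ₂ := PushoutI.of (φ := legs φ₁ φ₂) true

def inr : G₂ →* Amalgam φ₁ φ₂ := PushoutI.of (φ := legs φ₁ φ₂) false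

theorem inl_apply_eq_inr (c : C) : (inl (φ₁ c) : Amalgam φ₁ φ₂) = inr (φ₂ c) :=
  (PushoutI.of_apply_eq_base _ true c).trans (PushoutI.of_apply_eq_base _ false c).symm

theorem inl_injective (h₁ : Function.Injective φ₁) (h₂ : Function.Injective φ₂) :
    Function.Injective (inl : G₁ →* Amalgam φ₁ φ₂) :=
  PushoutI.of_injective (fun | true => h₁ | false => h₂) true

theorem inr_injective (h₁ : Function.Injective φ₁) (h₂ : Function.Injective φ₂) :
    Function.Injective (inr : G₂ →* Amalgam φ₁ φ₂) :=
  PushoutI.of_injective (fun | true => h₁ | false => h₂) false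

def factorHom (f₁ : G₁ →* P) (f₂ : G₂ →* P) : ∀ b, Factor G₁ G₂ b →* P
  | true => f₁
  | false => f₂

def lift (f₁ : G₁ →* P) (f₂ : G₂ →* P) (h : f₁.comp φ₁ = f₂.comp φ₂) : Amalgam φ₁ φ₂ →* P :=
  PushoutI.lift (factorHom f₁ f₂) (f₂.comp φ₂) (fun | true => h | false => rfl)

@[simp]
theorem lift_inl (f₁ : G₁ →* P) (f₂ : G₂ →* P) (h : f₁.comp φ₁ = f₂.comp φ₂) (x : G₁) :
    lift f₁ f₂ h (inl x) = f₁ x :=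
  PushoutI.lift_of (factorHom f₁ f₂) _ _ (i := true) x

@[simp]
theorem lift_inr (f₁ : G₁ →* P) (f₂ : G₂ →* P) (h : f₁.comp φ₁ = f₂.comp φ₂) (x : G₂) :
    lift f₁ f₂ h (inr x) = f₂ x :=
  PushoutI.lift_of (factorHom f₁ f₂) _ _ (i := false) x

theorem hom_ext {f g : Amalgam φ₁ φ₂ →* P} (h₁ : f.comp inl = g.comp inl)
    (h₂ : f.comp inr = g.comp inr) : f = g :=
  PushoutI.hom_ext_nonempty fun | true => h₁ | false => h₂

end Amalgam

namespace Subgroup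

variable {G : Type u} [Group G] {P : Type*} [Group P]

theorem hom_ext_sup {S T : Subgroup G} {f g : ↥(S ⊔ T) →* P}
    (hS : ∀ x (hx : x ∈ S), f ⟨x, mem_sup_left hx⟩ = g ⟨x, mem_sup_left hx⟩)
    (hT : ∀ x (hx : x ∈ T), f ⟨x, mem_sup_right hx⟩ = g ⟨x, mem_sup_right hx⟩) : f = g := by
  refine MonoidHom.eq_of_eqOn_top fun x _ => ?_
  have hle : S.subgroupOf (S ⊔ T) ⊔ T.subgroupOf (S ⊔ T) ≤ f.eqLocus g :=
    sup_le (fun x hx => hS x hx) (fun x hx => hT x hx)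
  exact hle ((codisjoint_subgroupOf_sup S T).eq_top ▸ mem_top x)

section Amalgam

variable {X Y C : Subgroup G} (hCX : C ≤ X) (hCY : C ≤ Y)

noncomputable def amalgamToSup : Amalgam (inclusion hCX) (inclusion hCY) →* ↥(X ⊔ Y) :=
  Amalgam.lift (inclusion le_sup_left) (inclusion le_sup_right) (by ext; rfl)

theorem amalgamToSup_inl (x : X) :
    amalgamToSup hCX hCY (Amalgam.inl x) = ⟨x, mem_sup_left x.2⟩ :=
  Amalgam.lift_inl ..

theorem amalgamToSup_inr (y : Y) :
    amalgamToSup hCX hCY (Amalgam.inr y) = ⟨y, mem_sup_right y.2⟩ :=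
  Amalgam.lift_inr ..

theorem amalgamToSup_surjective : Function.Surjective (amalgamToSup hCX hCY) := by
  rw [← MonoidHom.range_eq_top, eq_top_iff, ← (codisjoint_subgroupOf_sup X Y).eq_top]
  exact sup_le (fun x hx => ⟨Amalgam.inl ⟨x, hx⟩, amalgamToSup_inl ..⟩)
    (fun y hy => ⟨Amalgam.inr ⟨y, hy⟩, amalgamToSup_inr ..⟩)

theorem existsUnique_hom_sup (hinj : Function.Injective (amalgamToSup hCX hCY))
    (f : X →* P) (g : Y →* P) (hfg : ∀ c (hc : c ∈ C), f ⟨c, hCX hc⟩ = g ⟨c, hCY hc⟩) :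
    ∃! ψ : ↥(X ⊔ Y) →* P,
      (∀ x (hx : x ∈ X), ψ ⟨x, mem_sup_left hx⟩ = f ⟨x, hx⟩) ∧
      (∀ y (hy : y ∈ Y), ψ ⟨y, mem_sup_right hy⟩ = g ⟨y, hy⟩) := by
  let e := MulEquiv.ofBijective _ ⟨hinj, amalgamToSup_surjective hCX hCY⟩
  have he_inl (x : G) (hx : x ∈ X) : e.symm ⟨x, mem_sup_left hx⟩ = Amalgam.inl ⟨x, hx⟩ :=
    e.symm_apply_eq.mpr (amalgamToSup_inl hCX hCY ⟨x, hx⟩).symm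
  have he_inr (y : G) (hy : y ∈ Y) : e.symm ⟨y, mem_sup_right hy⟩ = Amalgam.inr ⟨y, hy⟩ :=
    e.symm_apply_eq.mpr (amalgamToSup_inr hCX hCY ⟨y, hy⟩).symm
  refine ⟨(Amalgam.lift f g (MonoidHom.ext fun c => hfg c.1 c.2)).comp e.symm.toMonoidHom,
    ⟨fun x hx => ?_, fun y hy => ?_⟩, fun ψ hψ => hom_ext_sup (fun x hx => ?_) (fun y hy => ?_)⟩
  · simp [he_inl x hx]
  · simp [he_inr y hy]
  · simp [hψ.1 x hx, he_inl x hx]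
  · simp [hψ.2 y hy, he_inr y hy]

theorem existsUnique_hom_range_sup {G₁ : Type*} [Group G₁] {i : G₁ →* G}
    (hi : Function.Injective i) {H : Subgroup G₁} (hY : H.map i ≤ Y)
    (hinj : Function.Injective (amalgamToSup (map_le_range i H) hY))
    (f : G₁ →* P) (g : Y →* P) (hfg : ∀ h : H, f h = g ⟨i h, hY (mem_map_of_mem i h.2)⟩) :
    ∃! ψ : ↥(i.range ⊔ Y) →* P,
      (∀ a, ψ ⟨i a, mem_sup_left ⟨a, rfl⟩⟩ = f a) ∧
      (∀ y : Y, ψ ⟨y, mem_sup_right y.2⟩ = g y) := by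
  let e := MonoidHom.ofInjective hi
  have he (a : G₁) : e.symm ⟨i a, a, rfl⟩ = a := e.symm_apply_eq.mpr (Subtype.ext rfl)
  obtain ⟨ψ, ⟨hψX, hψY⟩, huniq⟩ := existsUnique_hom_sup (map_le_range i H) hY hinj
    (f.comp e.symm.toMonoidHom) g (by rintro _ ⟨h, hh, rfl⟩; simpa [he] using hfg ⟨h, hh⟩)
  refine ⟨ψ, ⟨fun a => by simpa [he] using hψX (i a) ⟨a, rfl⟩, fun y => hψY y y.2⟩,
    fun ψ' ⟨hψ'X, hψ'Y⟩ => huniq ψ' ⟨?_, fun y hy => hψ'Y ⟨y, hy⟩⟩⟩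
  rintro _ ⟨a, rfl⟩
  simpa [he] using hψ'X a

end Amalgam

end Subgroup

namespace FPComm

variable {H : Subgroup A} {K : Subgroup B} {P : Type*} [Group P]

theorem commute_iaFP_ibFP {h : A} {k : B} (hh : h ∈ H) (hk : k ∈ K) :
    Commute (iaFP H K h) (ibFP H K k) := by
  rw [← commutatorElement_eq_one_iff_commute, iaFP, ibFP, MonoidHom.comp_apply,
    MonoidHom.comp_apply, ← map_commutatorElement, QuotientGroup.mk'_apply,
    QuotientGroup.eq_one_iff]
  exact Subgroup.subset_normalClosure ⟨h, hh, k, hk, rfl⟩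

noncomputable def lift (f : A →* P) (g : B →* P)
    (hfg : ∀ h ∈ H, ∀ k ∈ K, Commute (f h) (g k)) : FPComm H K →* P :=
  QuotientGroup.lift _ (Coprod.lift f g) <| Subgroup.normalClosure_le_normal <| by
    rintro _ ⟨h, hh, k, hk, rfl⟩
    simp [map_commutatorElement, commutatorElement_eq_one_iff_commute, hfg h hh k hk]

@[simp]
theorem lift_iaFP (f : A →* P) (g : B →* P) (hfg : ∀ h ∈ H, ∀ k ∈ K, Commute (f h) (g k))
    (a : A) : lift f g hfg (iaFP H K a) = f a := by
  simp [lift, iaFP]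

@[simp]
theorem lift_ibFP (f : A →* P) (g : B →* P) (hfg : ∀ h ∈ H, ∀ k ∈ K, Commute (f h) (g k))
    (b : B) : lift f g hfg (ibFP H K b) = g b := by
  simp [lift, ibFP]

theorem hom_ext {φ ψ : FPComm H K →* P} (hA : ∀ a, φ (iaFP H K a) = ψ (iaFP H K a))
    (hB : ∀ b, φ (ibFP H K b) = ψ (ibFP H K b)) : φ = ψ :=
  QuotientGroup.monoidHom_ext _ (Coprod.hom_ext (MonoidHom.ext hA) (MonoidHom.ext hB))

noncomputable def toProd : FPComm H K →* A × B :=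
  lift (MonoidHom.inl A B) (MonoidHom.inr A B) fun _ _ _ _ => by ext <;> simp

theorem toProd_iaFP (a : A) : toProd (iaFP H K a) = (a, 1) :=
  lift_iaFP ..

theorem toProd_ibFP (b : B) : toProd (ibFP H K b) = (1, b) :=
  lift_ibFP ..

theorem iaFP_injective : Function.Injective (iaFP H K) :=
  Function.LeftInverse.injective (g := Prod.fst ∘ toProd) fun a => by simp [toProd_iaFP]

theorem ibFP_injective : Function.Injective (ibFP H K) :=
  Function.LeftInverse.injective (g := Prod.snd ∘ toProd) fun b => by simp [toProd_ibFP]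

variable (H K) in
noncomputable def mulHK : H × K →* FPComm H K :=
  MonoidHom.noncommCoprod ((iaFP H K).comp H.subtype) ((ibFP H K).comp K.subtype)
    fun h k => commute_iaFP_ibFP h.2 k.2

theorem mulHK_apply (x : H × K) : mulHK H K x = iaFP H K x.1 * ibFP H K x.2 := rfl

theorem range_mulHK : (mulHK H K).range = Usub H K := by
  rw [mulHK, MonoidHom.noncommCoprod_range, MonoidHom.range_comp, MonoidHom.range_comp,
    Subgroup.range_subtype, Subgroup.range_subtype, Usub]

theorem mulHK_injective : Function.Injective (mulHK H K) :=
  fun x y hxy => by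
    have := congrArg toProd hxy
    simp only [mulHK_apply, map_mul, toProd_iaFP, toProd_ibFP, Prod.mk_mul_mk, mul_one, one_mul,
      Prod.mk.injEq] at this
    exact Prod.ext (Subtype.ext this.1) (Subtype.ext this.2)

variable (H K) in
noncomputable def prodEquivUsub : H × K ≃* Usub H K :=
  (MonoidHom.ofInjective mulHK_injective).trans (MulEquiv.subgroupCongr range_mulHK)

theorem coe_prodEquivUsub (x : H × K) : (prodEquivUsub H K x : FPComm H K) = mulHK H K x := rfl

theorem map_iaFP_le_Usub : H.map (iaFP H K) ≤ Usub H K := le_sup_left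

theorem map_ibFP_le_Usub : K.map (ibFP H K) ≤ Usub H K := le_sup_right

variable (H K)

abbrev AmalgamA : Type _ :=
  Amalgam (Subgroup.inclusion (H.map_le_range (iaFP H K)))
    (Subgroup.inclusion (map_iaFP_le_Usub (K := K)))

abbrev AmalgamB : Type _ :=
  Amalgam (Subgroup.inclusion (K.map_le_range (ibFP H K)))
    (Subgroup.inclusion (map_ibFP_le_Usub (H := H)))

abbrev AmalgamAB : Type _ :=
  Amalgam (Amalgam.inr : Usub H K →* AmalgamA H K) (Amalgam.inr : Usub H K →* AmalgamB H K)

noncomputable def ofA : A →* AmalgamAB H K :=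
  Amalgam.inl.comp (Amalgam.inl.comp (iaFP H K).rangeRestrict)

noncomputable def ofB : B →* AmalgamAB H K :=
  Amalgam.inr.comp (Amalgam.inl.comp (ibFP H K).rangeRestrict)

variable {H K}

theorem ofA_of_mem {h : A} (hh : h ∈ H) :
    ofA H K h = Amalgam.inl (Amalgam.inr ⟨iaFP H K h, map_iaFP_le_Usub ⟨h, hh, rfl⟩⟩) := by
  have hc : (Amalgam.inl ⟨iaFP H K h, h, rfl⟩ : AmalgamA H K) =
      Amalgam.inr ⟨iaFP H K h, map_iaFP_le_Usub ⟨h, hh, rfl⟩⟩ :=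
    Amalgam.inl_apply_eq_inr (⟨iaFP H K h, h, hh, rfl⟩ : H.map (iaFP H K))
  exact congrArg Amalgam.inl hc

theorem ofB_of_mem {k : B} (hk : k ∈ K) :
    ofB H K k = Amalgam.inl (Amalgam.inr ⟨ibFP H K k, map_ibFP_le_Usub ⟨k, hk, rfl⟩⟩) := by
  have hc : (Amalgam.inl ⟨ibFP H K k, k, rfl⟩ : AmalgamB H K) =
      Amalgam.inr ⟨ibFP H K k, map_ibFP_le_Usub ⟨k, hk, rfl⟩⟩ :=
    Amalgam.inl_apply_eq_inr (⟨ibFP H K k, k, hk, rfl⟩ : K.map (ibFP H K))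
  exact (congrArg Amalgam.inr hc).trans (Amalgam.inl_apply_eq_inr _).symm

variable (H K) in
noncomputable def toAmalgamAB : FPComm H K →* AmalgamAB H K :=
  lift (ofA H K) (ofB H K) fun h hh k hk => by
    have hc : Commute (⟨_, map_iaFP_le_Usub ⟨h, hh, rfl⟩⟩ : Usub H K)
        ⟨_, map_ibFP_le_Usub ⟨k, hk, rfl⟩⟩ :=
      Subtype.ext (commute_iaFP_ibFP hh hk)
    rw [ofA_of_mem hh, ofB_of_mem hk]
    exact (hc.map Amalgam.inr).map Amalgam.inl

theorem toAmalgamAB_iaFP (a : A) : toAmalgamAB H K (iaFP H K a) = ofA H K a :=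
  lift_iaFP ..

theorem toAmalgamAB_ibFP (b : B) : toAmalgamAB H K (ibFP H K b) = ofB H K b :=
  lift_ibFP ..

theorem toAmalgamAB_coe_Usub (u : Usub H K) :
    toAmalgamAB H K u = Amalgam.inl (Amalgam.inr u : AmalgamA H K) := by
  suffices (toAmalgamAB H K).comp (Usub H K).subtype =
      (Amalgam.inl : AmalgamA H K →* AmalgamAB H K).comp Amalgam.inr from
    DFunLike.congr_fun this u
  refine Subgroup.hom_ext_sup ?_ ?_
  · rintro _ ⟨h, hh, rfl⟩
    exact (toAmalgamAB_iaFP h).trans (ofA_of_mem hh)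
  · rintro _ ⟨k, hk, rfl⟩
    exact (toAmalgamAB_ibFP k).trans (ofB_of_mem hk)

theorem inr_injective_AmalgamA : Function.Injective (Amalgam.inr : Usub H K →* AmalgamA H K) :=
  Amalgam.inr_injective (Subgroup.inclusion_injective _) (Subgroup.inclusion_injective _)

theorem inr_injective_AmalgamB : Function.Injective (Amalgam.inr : Usub H K →* AmalgamB H K) :=
  Amalgam.inr_injective (Subgroup.inclusion_injective _) (Subgroup.inclusion_injective _)

theorem toAmalgamAB_comp_amalgamToSupA :
    (toAmalgamAB H K).comp ((Subgroup.subtype _).comp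
      (Subgroup.amalgamToSup (H.map_le_range (iaFP H K)) map_iaFP_le_Usub)) = Amalgam.inl := by
  refine Amalgam.hom_ext (MonoidHom.ext ?_) (MonoidHom.ext fun u => ?_)
  · rintro ⟨_, a, rfl⟩
    simp only [MonoidHom.comp_apply, Subgroup.amalgamToSup_inl, Subgroup.coe_subtype,
      toAmalgamAB_iaFP]
    rfl
  · simp only [MonoidHom.comp_apply, Subgroup.amalgamToSup_inr, Subgroup.coe_subtype,
      toAmalgamAB_coe_Usub]

theorem toAmalgamAB_comp_amalgamToSupB :
    (toAmalgamAB H K).comp ((Subgroup.subtype _).comp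
      (Subgroup.amalgamToSup (K.map_le_range (ibFP H K)) map_ibFP_le_Usub)) = Amalgam.inr := by
  refine Amalgam.hom_ext (MonoidHom.ext ?_) (MonoidHom.ext fun u => ?_)
  · rintro ⟨_, b, rfl⟩
    simp only [MonoidHom.comp_apply, Subgroup.amalgamToSup_inl, Subgroup.coe_subtype,
      toAmalgamAB_ibFP]
    rfl
  · simp only [MonoidHom.comp_apply, Subgroup.amalgamToSup_inr, Subgroup.coe_subtype,
      toAmalgamAB_coe_Usub]
    exact Amalgam.inl_apply_eq_inr u

theorem amalgamToSupA_injective :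
    Function.Injective (Subgroup.amalgamToSup (H.map_le_range (iaFP H K)) map_iaFP_le_Usub) := by
  refine Function.Injective.of_comp (f := (toAmalgamAB H K).comp (Subgroup.subtype _)) ?_
  rw [← MonoidHom.coe_comp, MonoidHom.comp_assoc, toAmalgamAB_comp_amalgamToSupA]
  exact Amalgam.inl_injective inr_injective_AmalgamA inr_injective_AmalgamB

theorem amalgamToSupB_injective :
    Function.Injective (Subgroup.amalgamToSup (K.map_le_range (ibFP H K)) map_ibFP_le_Usub) := by
  refine Function.Injective.of_comp (f := (toAmalgamAB H K).comp (Subgroup.subtype _)) ?_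
  rw [← MonoidHom.coe_comp, MonoidHom.comp_assoc, toAmalgamAB_comp_amalgamToSupB]
  exact Amalgam.inr_injective inr_injective_AmalgamA inr_injective_AmalgamB

noncomputable def liftMsubNsub (f : Msub H K →* P) (g : Nsub H K →* P)
    (hfg : ∀ u : Usub H K, f ⟨u, Subgroup.mem_sup_right u.2⟩ = g ⟨u, Subgroup.mem_sup_right u.2⟩) :
    FPComm H K →* P :=
  lift (f.comp ((iaFP H K).codRestrict _ fun a => Subgroup.mem_sup_left ⟨a, rfl⟩))
    (g.comp ((ibFP H K).codRestrict _ fun b => Subgroup.mem_sup_left ⟨b, rfl⟩))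
    fun h hh k hk => by
      have hc : Commute (⟨iaFP H K h, Subgroup.mem_sup_right (map_iaFP_le_Usub ⟨h, hh, rfl⟩)⟩ :
          Nsub H K) ⟨ibFP H K k, Subgroup.mem_sup_left ⟨k, rfl⟩⟩ :=
        Subtype.ext (commute_iaFP_ibFP hh hk)
      have hU : f ((iaFP H K).codRestrict (Msub H K) (fun a => Subgroup.mem_sup_left ⟨a, rfl⟩) h) =
          g ⟨iaFP H K h, Subgroup.mem_sup_right (map_iaFP_le_Usub ⟨h, hh, rfl⟩)⟩ :=
        hfg ⟨iaFP H K h, map_iaFP_le_Usub ⟨h, hh, rfl⟩⟩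
      rw [MonoidHom.comp_apply, MonoidHom.comp_apply, hU]
      exact hc.map g

variable (f : Msub H K →* P) (g : Nsub H K →* P)
  (hfg : ∀ u : Usub H K, f ⟨u, Subgroup.mem_sup_right u.2⟩ = g ⟨u, Subgroup.mem_sup_right u.2⟩)

theorem liftMsubNsub_iaFP (a : A) :
    liftMsubNsub f g hfg (iaFP H K a) = f ⟨iaFP H K a, Subgroup.mem_sup_left ⟨a, rfl⟩⟩ :=
  lift_iaFP ..

theorem liftMsubNsub_ibFP (b : B) :
    liftMsubNsub f g hfg (ibFP H K b) = g ⟨ibFP H K b, Subgroup.mem_sup_left ⟨b, rfl⟩⟩ :=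
  lift_ibFP ..

theorem liftMsubNsub_coe_Usub (u : Usub H K) :
    liftMsubNsub f g hfg u = g ⟨u, Subgroup.mem_sup_right u.2⟩ := by
  suffices (liftMsubNsub f g hfg).comp (Usub H K).subtype =
      g.comp (Subgroup.inclusion le_sup_right) from DFunLike.congr_fun this u
  refine Subgroup.hom_ext_sup ?_ ?_
  · rintro _ ⟨h, hh, rfl⟩
    exact (liftMsubNsub_iaFP f g hfg h).trans (hfg ⟨_, map_iaFP_le_Usub ⟨h, hh, rfl⟩⟩)
  · rintro _ ⟨k, -, rfl⟩
    exact liftMsubNsub_ibFP f g hfg k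

theorem liftMsubNsub_coe_Msub (m : Msub H K) : liftMsubNsub f g hfg m = f m := by
  suffices (liftMsubNsub f g hfg).comp (Msub H K).subtype = f from DFunLike.congr_fun this m
  refine Subgroup.hom_ext_sup ?_ fun u hu => ?_
  · rintro _ ⟨a, rfl⟩
    exact liftMsubNsub_iaFP f g hfg a
  · exact (liftMsubNsub_coe_Usub f g hfg ⟨u, hu⟩).trans (hfg ⟨u, hu⟩).symm

theorem liftMsubNsub_coe_Nsub (n : Nsub H K) : liftMsubNsub f g hfg n = g n := by
  suffices (liftMsubNsub f g hfg).comp (Nsub H K).subtype = g from DFunLike.congr_fun this n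
  refine Subgroup.hom_ext_sup ?_ fun u hu => ?_
  · rintro _ ⟨b, rfl⟩
    exact liftMsubNsub_ibFP f g hfg b
  · exact liftMsubNsub_coe_Usub f g hfg ⟨u, hu⟩

end FPComm

/-- Structure of `G = ⟨A * B; [H,K] = 1⟩`: `U = HK` is the direct product `H × K`;
`M = ⟨A, U⟩` is the amalgamated product of `A` and `U` over `H` (expressed by the
universal property of the pushout); `N = ⟨B, U⟩` is the amalgamated product of `B`
and `U` over `K`; and `G` is the amalgamated product of `M` and `N` over `U`. -/
theorem fpComm_structure (H : Subgroup A) (K : Subgroup B) :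
    -- U ≅ H × K, compatibly with the embeddings of H and K
    (∃ e : (↥H × ↥K) ≃* ↥(Usub H K),
      (∀ h : ↥H, ((e (h, 1) : ↥(Usub H K)) : FPComm H K) = iaFP H K h) ∧
      (∀ k : ↥K, ((e (1, k) : ↥(Usub H K)) : FPComm H K) = ibFP H K k)) ∧
    -- M = ⟨A * U; H⟩ : universal property of the pushout of A ← H → U
    (∀ (P : Type*) [Group P] (f : A →* P) (g : ↥(Usub H K) →* P),
      (∀ h : ↥H, f h =
          g ⟨iaFP H K h, Subgroup.mem_sup_left (Subgroup.mem_map_of_mem _ h.2)⟩) →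
      ∃! φ : ↥(Msub H K) →* P,
        (∀ a : A, φ ⟨iaFP H K a, Subgroup.mem_sup_left ⟨a, rfl⟩⟩ = f a) ∧
        (∀ u : ↥(Usub H K), φ ⟨(u : FPComm H K), Subgroup.mem_sup_right u.2⟩ = g u)) ∧
    -- N = ⟨B * U; K⟩
    (∀ (P : Type*) [Group P] (f : B →* P) (g : ↥(Usub H K) →* P),
      (∀ k : ↥K, f k =
          g ⟨ibFP H K k, Subgroup.mem_sup_right (Subgroup.mem_map_of_mem _ k.2)⟩) →
      ∃! φ : ↥(Nsub H K) →* P,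
        (∀ b : B, φ ⟨ibFP H K b, Subgroup.mem_sup_left ⟨b, rfl⟩⟩ = f b) ∧
        (∀ u : ↥(Usub H K), φ ⟨(u : FPComm H K), Subgroup.mem_sup_right u.2⟩ = g u)) ∧
    -- G = ⟨M * N; U⟩
    (∀ (P : Type*) [Group P] (f : ↥(Msub H K) →* P) (g : ↥(Nsub H K) →* P),
      (∀ u : ↥(Usub H K),
          f ⟨(u : FPComm H K), Subgroup.mem_sup_right u.2⟩ =
          g ⟨(u : FPComm H K), Subgroup.mem_sup_right u.2⟩) →
      ∃! φ : FPComm H K →* P,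
        (∀ m : ↥(Msub H K), φ (m : FPComm H K) = f m) ∧
        (∀ n : ↥(Nsub H K), φ (n : FPComm H K) = g n)) := by
  refine ⟨⟨FPComm.prodEquivUsub H K, fun h => ?_, fun k => ?_⟩,
    fun P _ f g hfg => Subgroup.existsUnique_hom_range_sup FPComm.iaFP_injective _
      FPComm.amalgamToSupA_injective f g hfg,
    fun P _ f g hfg => Subgroup.existsUnique_hom_range_sup FPComm.ibFP_injective _
      FPComm.amalgamToSupB_injective f g hfg,
    fun P _ f g hfg => ⟨FPComm.liftMsubNsub f g hfg,
      ⟨FPComm.liftMsubNsub_coe_Msub f g hfg, FPComm.liftMsubNsub_coe_Nsub f g hfg⟩,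
      fun ψ ⟨hψM, hψN⟩ => FPComm.hom_ext (fun a => ?_) (fun b => ?_)⟩⟩
  · simp [FPComm.coe_prodEquivUsub, FPComm.mulHK_apply]
  · simp [FPComm.coe_prodEquivUsub, FPComm.mulHK_apply]
  · exact (hψM _).trans (FPComm.liftMsubNsub_iaFP f g hfg a).symm
  · exact (hψN _).trans (FPComm.liftMsubNsub_ibFP f g hfg b).symm
end

section
/- Let X be a residually-(finite π) group, let x ∈ X be of infinite order, and let I be the π'-isolator of ⟨x⟩. For any π-number l and any cyclic subgroup ⟨u⟩ with ⟨x⟩ ≤ ⟨u⟩ ≤ I, if v ∈ I and v^l ∈ ⟨u⟩, then v ∈ ⟨u⟩ and hence v^l ∈ ⟨u^l⟩; that is, I^l ∩ ⟨u⟩ ≤ ⟨u^l⟩. -/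
open Pointwise

/-- For `x` of infinite order in a residually-(finite π) group, with `I` the set of
π'-roots of `⟨x⟩` (the π'-isolator of `⟨x⟩`): `I ^ l ∩ ⟨u⟩ ≤ ⟨u ^ l⟩` for every
π-number `l` and every `u ∈ I` with `⟨x⟩ ≤ ⟨u⟩`. -/
theorem isolator_power_inter (π : Set ℕ) {X : Type*} [Group X]
    (hres : ResiduallyPi π X) (x : X) (hx : ¬ IsOfFinOrder x)
    (u : X)
    (hu : u ∈ {v : X | ∃ q : ℕ, IsPiPrimeNumber π q ∧ v ^ q ∈ Subgroup.zpowers x})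
    (hxu : x ∈ Subgroup.zpowers u)
    (l : ℕ) (hl : IsPiNumber π l) :
    ∀ v ∈ {v : X | ∃ q : ℕ, IsPiPrimeNumber π q ∧ v ^ q ∈ Subgroup.zpowers x},
      v ^ l ∈ Subgroup.zpowers u →
        v ∈ Subgroup.zpowers u ∧ v ^ l ∈ Subgroup.zpowers (u ^ l) := by
  intro v hv hvl
  obtain ⟨q, hq, hvq⟩ := hv
  -- v^q ∈ ⟨u⟩
  have hvqu : v ^ q ∈ Subgroup.zpowers u := Subgroup.zpowers_le.mpr hxu hvq
  -- q and l are coprime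
  have hcop : Nat.Coprime q l := by
    by_contra h
    have hp : (Nat.gcd q l).minFac.Prime := Nat.minFac_prime h
    have h1 : (Nat.gcd q l).minFac ∣ q := ((Nat.gcd q l).minFac_dvd).trans (Nat.gcd_dvd_left q l)
    have h2 : (Nat.gcd q l).minFac ∣ l := ((Nat.gcd q l).minFac_dvd).trans (Nat.gcd_dvd_right q l)
    exact hq.2 _ hp h1 (hl.2 _ hp h2)
  have hcopZ : IsCoprime (q : ℤ) (l : ℤ) := Int.isCoprime_iff_gcd_eq_one.mpr (by
    simpa [Int.gcd_natCast_natCast] using hcop)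
  obtain ⟨a, b, hab⟩ := hcopZ
  have hvu : v ∈ Subgroup.zpowers u := by
    have : v = (v ^ (q : ℤ)) ^ a * (v ^ (l : ℤ)) ^ b := by
      rw [← zpow_mul, ← zpow_mul, ← zpow_add, mul_comm (q : ℤ) a, mul_comm (l : ℤ) b, hab,
        zpow_one]
    rw [this]
    exact mul_mem (zpow_mem (by simpa using hvqu) a) (zpow_mem (by simpa using hvl) b)
  refine ⟨hvu, ?_⟩
  rw [Subgroup.mem_zpowers_iff] at hvu
  obtain ⟨k, hk⟩ := hvu
  rw [Subgroup.mem_zpowers_iff]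
  refine ⟨k, ?_⟩
  rw [← hk, ← zpow_natCast u l, ← zpow_mul, mul_comm, zpow_mul, zpow_natCast]
end
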